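/- arXiv:2212.11163 — 2 statements merged into one kernel-verified Lean document; each statement's English description precedes it below -/
import Mathlib

section
/- There do not exist C^∞ functions F, G, H : ℝ² → ℝ such that for all (x,y) ∈ ℝ²: F(x,y)·y + x·y·G(x,y) = 0 and F(x,y)·x + x·y·H(x,y) = x. -/
/-- Example 5.15: the 1-form `x·dy` on `ℝ²` does not lie in the submodule
`J = C^∞(ℝ²)·d(xy) + xy·d(C^∞(ℝ²))`: there are no smooth `F, G, H`
with `F·y + xy·G = 0` (the `dx`-coefficient) and `F·x + xy·H = x` (the `dy`-coefficient). -/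
theorem x_dy_not_in_J :
    ¬ ∃ F G H : ℝ × ℝ → ℝ, ContDiff ℝ (⊤ : ℕ∞) F ∧ ContDiff ℝ (⊤ : ℕ∞) G ∧ ContDiff ℝ (⊤ : ℕ∞) H ∧
      ∀ p : ℝ × ℝ, F p * p.2 + p.1 * p.2 * G p = 0 ∧ F p * p.1 + p.1 * p.2 * H p = p.1 := by
  rintro ⟨F, G, H, hF, hG, hH, hpq⟩
  have hFc : Continuous F := hF.continuous
  have hGc : Continuous G := hG.continuous
  -- Step 1: F p + p.1 * G p = 0 everywhere (by continuity, since it holds for p.2 ≠ 0).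
  have hdense : Dense {p : ℝ × ℝ | p.2 ≠ 0} := by
    have : Dense ((Set.univ : Set ℝ) ×ˢ ({0}ᶜ : Set ℝ)) :=
      dense_univ.prod (dense_compl_singleton (0 : ℝ))
    convert this using 1
    ext p
    simp [Set.mem_prod]
  have key : ∀ p : ℝ × ℝ, F p + p.1 * G p = 0 := by
    have := Continuous.ext_on hdense (by continuity : Continuous fun p : ℝ × ℝ => F p + p.1 * G p)
      continuous_const (fun p hp => by
        have h1 := (hpq p).1
        have : (F p + p.1 * G p) * p.2 = 0 := by ring_nf; ring_nf at h1; linarith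
        exact (mul_eq_zero.mp this).resolve_right hp)
    exact fun p => congrFun this p
  -- Step 2: on the x-axis, F (x,0) * x = x, and F (x,0) = -x * G (x,0).
  have key2 : ∀ x : ℝ, x * G (x, 0) + 1 = 0 := by
    have := Continuous.ext_on (dense_compl_singleton (0 : ℝ))
      (by continuity : Continuous fun x : ℝ => x * G (x, 0) + 1)
      continuous_const (fun x hx => by
        have h2 := (hpq (x, 0)).2
        simp only at h2
        have hFx : F (x, 0) = -(x * G (x, 0)) := by have := key (x, 0); simp at this; linarith
        have hx0 : (x : ℝ) ≠ 0 := hx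
        have : x * (x * G (x, 0) + 1) = 0 := by
          rw [hFx] at h2; ring_nf at h2 ⊢; linarith
        exact (mul_eq_zero.mp this).resolve_left hx0)
    exact fun x => congrFun this x
  have := key2 0
  norm_num at this
end

section
/- Let M ⊆ ℝⁿ be a closed subset and let I = {f ∈ C^∞(ℝⁿ) : f(p) = 0 for all p ∈ M} be the ideal of smooth functions vanishing on M; write [f] for the class of f in the quotient module C^∞(ℝⁿ)/I. Suppose v : C^∞(ℝⁿ) → C^∞(ℝⁿ)/I is a map satisfying the C^∞-chain rule: for every k ∈ ℕ, every C^∞ function h : ℝᵏ → ℝ, and all f₁, …, f_k ∈ C^∞(ℝⁿ), one has v(h ∘ (f₁,…,f_k)) = Σᵢ [(∂ᵢh) ∘ (f₁,…,f_k)] · v(fᵢ). Then there exist C^∞ functions a₁, …, aₙ : ℝⁿ → ℝ such that v(f) = [Σᵢ aᵢ · ∂f/∂xᵢ] for every f ∈ C^∞(ℝⁿ). -/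
/-- The commutative `ℝ`-algebra of `C^∞` functions `ℝⁿ → ℝ`, as a subalgebra of the
algebra of all functions. -/
def smoothFunctions (n : ℕ) : Subalgebra ℝ ((Fin n → ℝ) → ℝ) where
  carrier := {f | ContDiff ℝ (⊤ : ℕ∞) f}
  mul_mem' := fun {a b} (ha : ContDiff ℝ (⊤ : ℕ∞) a) (hb : ContDiff ℝ (⊤ : ℕ∞) b) => ha.mul hb
  add_mem' := fun {a b} (ha : ContDiff ℝ (⊤ : ℕ∞) a) (hb : ContDiff ℝ (⊤ : ℕ∞) b) => ha.add hb
  algebraMap_mem' := fun _ => (contDiff_const : ContDiff ℝ (⊤ : ℕ∞) _)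

/-- The ideal of smooth functions on `ℝⁿ` vanishing on a subset `M ⊆ ℝⁿ`. -/
def vanishingIdeal (n : ℕ) (M : Set (Fin n → ℝ)) : Ideal (smoothFunctions n) where
  carrier := {f | ∀ p ∈ M, f.1 p = 0}
  add_mem' := by
    intro a b ha hb p hp
    show a.1 p + b.1 p = 0
    rw [ha p hp, hb p hp, add_zero]
  zero_mem' := fun p _ => rfl
  smul_mem' := by
    intro c f hf p hp
    show c.1 p * f.1 p = 0
    rw [hf p hp, mul_zero]

/-- The coordinate functions as smooth functions. -/
def coordFn (n : ℕ) (i : Fin n) : smoothFunctions n :=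
  ⟨fun x => x i, show ContDiff ℝ (⊤ : ℕ∞) _ from contDiff_apply ℝ ℝ i⟩

/-- Partial derivatives of a smooth function are smooth. -/
lemma partial_smooth (n : ℕ) (f : smoothFunctions n) (i : Fin n) :
    ContDiff ℝ (⊤ : ℕ∞) (fun x => fderiv ℝ f.1 x (Pi.single i 1)) :=
  ((show ContDiff ℝ (⊤ : ℕ∞) f.1 from f.2).fderiv_right (by simp)).clm_apply contDiff_const

set_option synthInstance.maxHeartbeats 1000000 in
/-- Lemma 3.15 (lem:3.15aug): let `M ⊆ ℝⁿ` be closed, `I` the ideal of smooth functions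
vanishing on `M`, and `v : C^∞(ℝⁿ) → C^∞(ℝⁿ)/I` a map satisfying the `C^∞`-chain rule:
`v (h ∘ (f₁, …, f_k)) = Σᵢ [(∂ᵢh) ∘ (f₁, …, f_k)] · v fᵢ`.  Then there exist smooth
functions `a₁, …, aₙ` such that `v f = [Σᵢ aᵢ · ∂f/∂xᵢ]` for every `f ∈ C^∞(ℝⁿ)`. -/
theorem cinfty_derivation_is_vector_field (n : ℕ) (M : Set (Fin n → ℝ)) (hM : IsClosed M)
    (v : smoothFunctions n → (smoothFunctions n ⧸ vanishingIdeal n M))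
    (hv : ∀ (k : ℕ) (h : (Fin k → ℝ) → ℝ), ContDiff ℝ (⊤ : ℕ∞) h →
      ∀ (f : Fin k → smoothFunctions n) (F : smoothFunctions n),
        (∀ x, F.1 x = h (fun i => (f i).1 x)) →
        ∀ G : Fin k → smoothFunctions n,
          (∀ i x, (G i).1 x = fderiv ℝ h (fun j => (f j).1 x) (Pi.single i 1)) →
          v F = ∑ i, Ideal.Quotient.mk (vanishingIdeal n M) (G i) * v (f i)) :
    ∃ a : Fin n → smoothFunctions n,
      ∀ f : smoothFunctions n, ∃ g : smoothFunctions n,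
        (∀ x, g.1 x = ∑ i, (a i).1 x * fderiv ℝ f.1 x (Pi.single i 1)) ∧
        v f = Ideal.Quotient.mk (vanishingIdeal n M) g := by
  choose a ha using fun i => Ideal.Quotient.mk_surjective (I := vanishingIdeal n M)
    (v (coordFn n i))
  refine ⟨a, fun f => ?_⟩
  set G : Fin n → smoothFunctions n :=
    fun i => ⟨fun x => fderiv ℝ f.1 x (Pi.single i 1), partial_smooth n f i⟩ with hG
  refine ⟨∑ i, a i * G i, ?_, ?_⟩
  · intro x
    simp [AddSubmonoidClass.coe_finset_sum, Finset.sum_apply, G]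
  · have key := hv n f.1 f.2 (coordFn n) f (fun x => rfl) G (fun i x => rfl)
    rw [key]
    rw [map_sum]
    congr 1
    funext i
    rw [← ha i, ← map_mul, mul_comm]
end
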